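/- (Under the hypothesis of Theorem 1, the reordered parameter sums c̃_i + ⋯ + c̃_{j−1} are never nonpositive integers.) Let θ : ℤ/lℤ → ℤ satisfy Σ_k θ_k = 0 and S_θ(i,j) ≠ 0 for all distinct i, j, and let η : {1,…,l} → ℤ/lℤ be a bijection such that S_θ(η_i, η_j) < 0 whenever 1 ≤ i < j ≤ l. Let c : ℤ/lℤ → ℂ satisfy Σ_k c_k = 0 and assume: for all distinct i, j ∈ ℤ/lℤ, if S_c(i,j) is a nonnegative integer then S_θ(i,j) < 0. Then for all 1 ≤ i < j ≤ l, the complex number S_c(η_i, η_j) is not a nonpositive integer. -/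
import Mathlib


/-- The cyclic partial sum `S_f(i,j) = f_i + f_{i+1} + ⋯ + f_{j−1}` for a function
`f : ℤ/lℤ → A` into an additive abelian group:
`S_f(i,j) = Σ_{k=0}^{d−1} f_{i+k}` where `d = (j−i).val` (for `i ≠ j` this is the unique
`d` with `1 ≤ d ≤ l−1` and `j = i + d` in `ℤ/lℤ`). -/
def cyclicSum {l : ℕ} {M : Type*} [AddCommMonoid M] (f : ZMod l → M) (i j : ZMod l) : M :=
  ∑ m ∈ Finset.range ((j - i).val), f (i + (m : ZMod l))

lemma cyclicSum_add {l : ℕ} [NeZero l] {M : Type*} [AddCommGroup M] (f : ZMod l → M)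
    {i j : ZMod l} (h : i ≠ j) :
    cyclicSum f i j + cyclicSum f j i = ∑ k : ZMod l, f k := by
  have hji : j - i ≠ 0 := sub_ne_zero.mpr (Ne.symm h)
  have hval : (((j - i).val : ℕ) : ZMod l) = j - i := by
    simp [ZMod.natCast_val, ZMod.cast_id]
  have hde : (j - i).val + (i - j).val = l := by
    have hneg : i - j = -(j - i) := by ring
    haveI hz : NeZero (j - i) := ⟨hji⟩
    have hlt := ZMod.val_lt (j - i)
    have hd : 0 < (j - i).val := ZMod.val_pos.mpr hji
    rw [hneg, ZMod.val_neg_of_ne_zero]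
    omega
  have key : ∑ m ∈ Finset.range ((i - j).val), f (j + (m : ZMod l)) =
      ∑ m ∈ Finset.range ((i - j).val), f (i + (((j - i).val + m : ℕ) : ZMod l)) := by
    refine Finset.sum_congr rfl fun m _ => ?_
    congr 1
    push_cast
    rw [hval]
    ring
  unfold cyclicSum
  rw [key, ← Finset.sum_range_add, hde]
  rw [← Fintype.sum_equiv (Equiv.addLeft i) (fun k => f (i + k)) f (fun k => rfl)]
  refine Finset.sum_nbij' (fun m => (m : ZMod l)) (fun k => k.val) ?_ ?_ ?_ ?_ ?_
  · intro a _; exact Finset.mem_univ _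
  · intro a _; exact Finset.mem_range.mpr (ZMod.val_lt a)
  · intro a ha; exact ZMod.val_cast_of_lt (Finset.mem_range.mp ha)
  · intro a _; simp [ZMod.natCast_val, ZMod.cast_id]
  · intro a _; rfl

/-- Under the hypothesis of Theorem 1, the reordered parameter sums
`c̃_i + ⋯ + c̃_{j−1} = S_c(η_i, η_j)` are never nonpositive integers. -/
theorem reordered_sums_not_nonpositive_integers (l : ℕ) [NeZero l]
    (θ : ZMod l → ℤ) (hsum : ∑ k : ZMod l, θ k = 0)
    (hne : ∀ i j : ZMod l, i ≠ j → cyclicSum θ i j ≠ 0)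
    (η : Fin l → ZMod l) (hη : Function.Bijective η)
    (hord : ∀ i j : Fin l, i < j → cyclicSum θ (η i) (η j) < 0)
    (c : ZMod l → ℂ) (hcsum : ∑ k : ZMod l, c k = 0)
    (hc : ∀ i j : ZMod l, i ≠ j → (∃ n : ℕ, cyclicSum c i j = (n : ℂ)) →
      cyclicSum θ i j < 0) :
    ∀ i j : Fin l, i < j →
      ¬ ∃ n : ℤ, n ≤ 0 ∧ cyclicSum c (η i) (η j) = (n : ℂ) := by
  rintro i j hij ⟨n, hn, heq⟩
  have hne' : η i ≠ η j := fun h => hij.ne (hη.1 h)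
  have hcadd := cyclicSum_add c hne'
  have hrev : cyclicSum c (η j) (η i) = (((-n).toNat : ℕ) : ℂ) := by
    have : cyclicSum c (η j) (η i) = -(n : ℂ) := by
      rw [heq] at hcadd; rw [hcsum] at hcadd; linear_combination hcadd
    rw [this]
    norm_cast
    omega
  have hθ1 := hord i j hij
  have hθ2 := hc (η j) (η i) hne'.symm ⟨(-n).toNat, hrev⟩
  have hθadd := cyclicSum_add θ hne'
  rw [hsum] at hθadd
  omega
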